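/- Let 1 < p < ∞, u : [a,b] → ℝ Hölder continuous of order r ∈ (0,1] with constant H, and f : [a,b] → ℝ Lipschitz with constant L. Then for all a ≤ t₀ ≤ x ≤ t₁ ≤ b, |∫ₐᵇ f du − [u(x) − u(a)]·f(t₀) − [u(b) − u(x)]·f(t₁)| ≤ L·H·[ (t₀−a)^{r+1}/(rp+1)^{1/p} + (t₁−t₀)^{1−1/p}·( ((x−t₀)^{rp+1} + (t₁−x)^{rp+1}) / (rp+1) )^{1/p} + (b−t₁)^{r+1}/(rp+1)^{1/p} ]. -/

import Mathlib

/-- A tagged partition of the interval `[a, b]`. -/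
structure TaggedPartition (a b : ℝ) where
  n : ℕ
  pts : ℕ → ℝ
  tag : ℕ → ℝ
  mono : ∀ i, pts i ≤ pts (i + 1)
  first : pts 0 = a
  last : pts n = b
  tag_mem : ∀ i, pts i ≤ tag i ∧ tag i ≤ pts (i + 1)

/-- The Riemann–Stieltjes sum of `f` with respect to `u` over a tagged partition. -/
def RSsum (f u : ℝ → ℝ) {a b : ℝ} (P : TaggedPartition a b) : ℝ :=
  ∑ i ∈ Finset.range P.n, f (P.tag i) * (u (P.pts (i + 1)) - u (P.pts i))

/-- `IsRSIntegral f u a b I` means the Riemann–Stieltjes integral `∫ₐᵇ f du` exists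
and equals `I`: Riemann–Stieltjes sums converge to `I` as the mesh tends to `0`. -/
def IsRSIntegral (f u : ℝ → ℝ) (a b I : ℝ) : Prop :=
  ∀ ε > 0, ∃ δ > 0, ∀ P : TaggedPartition a b,
    (∀ i < P.n, P.pts (i + 1) - P.pts i < δ) → |RSsum f u P - I| < ε

/-- The total (Jordan) variation of `u` on `[a, b]`. -/
noncomputable def totalVar (u : ℝ → ℝ) (a b : ℝ) : ℝ :=
  (eVariationOn u (Set.Icc a b)).toReal

/-! Split `[a, b]` at `t0 ≤ x ≤ t1`. On each of the four pieces, Riemann–Stieltjes sums over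
uniform partitions tagged at the endpoint where `f` is frozen differ from `f(endpoint) · Δu` by at
most `L H ℓ ^ (r + 1) / (r + 1)`, `ℓ` the length of the piece: summation by parts turns the
difference into `∑ Δf · (u - u(endpoint))`, a Riemann sum of `L H s ^ r`. Bernoulli's inequality
gives `(r p + 1) ^ (1 / p) ≤ r + 1`, and Hölder's inequality for two terms merges the two middle
pieces into the `Lᵖ` term. -/

open Finset

lemma rpow_one_div_le_add_one {r p : ℝ} (hr : 0 ≤ r) (hp : 1 ≤ p) :
    (r * p + 1) ^ (1 / p) ≤ r + 1 := by
  have hp0 : 0 < p := by linarith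
  calc (r * p + 1) ^ (1 / p) ≤ ((1 + r) ^ p) ^ (1 / p) := by
        gcongr
        linarith [one_add_mul_self_le_rpow_one_add (by linarith : -1 ≤ r) hp]
    _ = r + 1 := by
        rw [← Real.rpow_mul (by linarith), mul_one_div_cancel hp0.ne', Real.rpow_one, add_comm]

lemma inner_le_Lp_mul_Lq_two {p : ℝ} (hp : 1 < p) {A B C D : ℝ} (hA : 0 ≤ A) (hB : 0 ≤ B)
    (hC : 0 ≤ C) (hD : 0 ≤ D) :
    A ^ (1 - 1 / p) * C + B ^ (1 - 1 / p) * D ≤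
      (A + B) ^ (1 - 1 / p) * (C ^ p + D ^ p) ^ (1 / p) := by
  have hpq : p.HolderConjugate (Real.conjExponent p) := .conjExponent hp
  have hq : 1 / Real.conjExponent p = 1 - 1 / p := by
    rw [eq_sub_iff_add_eq, add_comm, one_div, one_div]; exact hpq.inv_add_inv_eq_one
  have hroot : ∀ {X : ℝ}, 0 ≤ X → (X ^ (1 - 1 / p)) ^ Real.conjExponent p = X := fun hX => by
    rw [← Real.rpow_mul hX, ← hq, one_div_mul_cancel hpq.symm.ne_zero, Real.rpow_one]
  have := Real.inner_le_Lp_mul_Lq_of_nonneg univ (f := ![A ^ (1 - 1 / p), B ^ (1 - 1 / p)])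
    (g := ![C, D]) hpq.symm (by simp [Fin.forall_fin_two]; constructor <;> positivity)
    (by simp [Fin.forall_fin_two, hC, hD])
  simp only [Fin.sum_univ_two, Matrix.cons_val_zero, Matrix.cons_val_one, hroot hA, hroot hB,
    hq] at this
  exact this

lemma add_rpow_div_le {r p A B : ℝ} (hr : 0 ≤ r) (hp : 1 < p) (hA : 0 ≤ A) (hB : 0 ≤ B) :
    (A ^ (r + 1) + B ^ (r + 1)) / (r + 1) ≤
      (A + B) ^ (1 - 1 / p) * ((A ^ (r * p + 1) + B ^ (r * p + 1)) / (r * p + 1)) ^ (1 / p) := by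
  have hp0 : 0 < p := by linarith
  have hrp : 0 < r * p + 1 := by positivity
  have split : ∀ {X : ℝ}, 0 ≤ X → X ^ (r + 1) = X ^ (1 - 1 / p) * X ^ ((r * p + 1) / p) :=
    fun hX => by
      rw [← Real.rpow_add' hX (by field_simp; positivity)]
      congr 1
      field_simp
      ring
  have root : ∀ {X : ℝ}, 0 ≤ X → (X ^ ((r * p + 1) / p)) ^ p = X ^ (r * p + 1) :=
    fun hX => by rw [← Real.rpow_mul hX, div_mul_cancel₀ _ hp0.ne']
  calc (A ^ (r + 1) + B ^ (r + 1)) / (r + 1)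
      ≤ (A ^ (r + 1) + B ^ (r + 1)) / (r * p + 1) ^ (1 / p) := by
        gcongr
        exact rpow_one_div_le_add_one hr hp.le
    _ ≤ (A + B) ^ (1 - 1 / p) * (A ^ (r * p + 1) + B ^ (r * p + 1)) ^ (1 / p) /
          (r * p + 1) ^ (1 / p) := by
        gcongr
        rw [split hA, split hB, ← root hA, ← root hB]
        exact inner_le_Lp_mul_Lq_two hp hA hB (by positivity) (by positivity)
    _ = (A + B) ^ (1 - 1 / p) * ((A ^ (r * p + 1) + B ^ (r * p + 1)) / (r * p + 1)) ^ (1 / p) := by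
        rw [Real.div_rpow (by positivity) hrp.le, mul_div_assoc]

lemma sum_range_rpow_le {r : ℝ} (hr : 0 ≤ r) (N : ℕ) :
    ∑ i ∈ range N, (i : ℝ) ^ r ≤ (N : ℝ) ^ (r + 1) / (r + 1) := by
  have hmono : MonotoneOn (fun x : ℝ => x ^ r) (Set.Icc 0 (0 + N)) :=
    fun x hx y _ hxy => Real.rpow_le_rpow hx.1 hxy hr
  have := hmono.sum_le_integral
  simp only [zero_add] at this
  rwa [integral_rpow (by left; linarith), Real.zero_rpow (by positivity), sub_zero] at this

lemma sum_range_succ_mul_sub_eq_sub_sum (φ ψ : ℕ → ℝ) (N : ℕ) :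
    ∑ i ∈ range N, φ (i + 1) * (ψ (i + 1) - ψ i) =
      φ N * ψ N - φ 0 * ψ 0 - ∑ i ∈ range N, (φ (i + 1) - φ i) * ψ i := by
  rw [← sum_range_sub (fun i => φ i * ψ i), eq_sub_iff_add_eq, ← sum_add_distrib]
  exact sum_congr rfl fun i _ => by ring

lemma sum_range_mul_sub_eq_sub_sum_succ (φ ψ : ℕ → ℝ) (N : ℕ) :
    ∑ i ∈ range N, φ i * (ψ (i + 1) - ψ i) =
      φ N * ψ N - φ 0 * ψ 0 - ∑ i ∈ range N, (φ (i + 1) - φ i) * ψ (i + 1) := by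
  rw [← sum_range_sub (fun i => φ i * ψ i), eq_sub_iff_add_eq, ← sum_add_distrib]
  exact sum_congr rfl fun i _ => by ring

namespace TaggedPartition

variable {c d : ℝ} (P : TaggedPartition c d)

lemma monotone_pts : Monotone P.pts := monotone_nat_of_le_succ P.mono

lemma pts_mem_Icc {i : ℕ} (hi : i ≤ P.n) : P.pts i ∈ Set.Icc c d :=
  ⟨by simpa only [P.first] using P.monotone_pts (Nat.zero_le i),
    by simpa only [P.last] using P.monotone_pts hi⟩

def MeshLT (δ : ℝ) : Prop := ∀ i < P.n, P.pts (i + 1) - P.pts i < δ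

section Estimates

variable {f u : ℝ → ℝ} {S : Set ℝ} {H L r : ℝ}

lemma abs_mul_le_of_holder_lipschitz
    (hu : ∀ s ∈ S, ∀ t ∈ S, |u s - u t| ≤ H * |s - t| ^ r)
    (hf : ∀ s ∈ S, ∀ t ∈ S, |f s - f t| ≤ L * |s - t|) (hS : Set.Icc c d ⊆ S) {i j k : ℕ}
    (hi : i < P.n) (hj : j ≤ P.n) (hk : k ≤ P.n) :
    |(f (P.pts (i + 1)) - f (P.pts i)) * (u (P.pts j) - u (P.pts k))| ≤
      L * (P.pts (i + 1) - P.pts i) * (H * |P.pts j - P.pts k| ^ r) := by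
  have mem : ∀ {m}, m ≤ P.n → P.pts m ∈ S := fun hm => hS (P.pts_mem_Icc hm)
  have hfi := hf _ (mem hi) _ (mem hi.le)
  rw [abs_of_nonneg (sub_nonneg.2 (P.mono i))] at hfi
  rw [abs_mul]
  exact mul_le_mul hfi (hu _ (mem hj) _ (mem hk)) (abs_nonneg _) ((abs_nonneg _).trans hfi)

lemma abs_RSsum_sub_le_of_tag_eq_succ (htag : ∀ i, P.tag i = P.pts (i + 1))
    (hu : ∀ s ∈ S, ∀ t ∈ S, |u s - u t| ≤ H * |s - t| ^ r)
    (hf : ∀ s ∈ S, ∀ t ∈ S, |f s - f t| ≤ L * |s - t|) (hS : Set.Icc c d ⊆ S) :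
    |RSsum f u P - f d * (u d - u c)| ≤
      ∑ i ∈ range P.n, L * (P.pts (i + 1) - P.pts i) * (H * (P.pts i - c) ^ r) := by
  have abel := sum_range_succ_mul_sub_eq_sub_sum (fun i => f (P.pts i))
    (fun i => u (P.pts i) - u c) P.n
  simp only [P.first, P.last, sub_self, mul_zero, sub_zero, sub_sub_sub_cancel_right] at abel
  have hsum : RSsum f u P - f d * (u d - u c) =
      -∑ i ∈ range P.n, (f (P.pts (i + 1)) - f (P.pts i)) * (u (P.pts i) - u c) := by
    simp only [RSsum, htag, abel]; ring
  rw [hsum, abs_neg]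
  refine (abs_sum_le_sum_abs _ _).trans (sum_le_sum fun i hi => ?_)
  have key := P.abs_mul_le_of_holder_lipschitz hu hf hS (mem_range.1 hi) (mem_range.1 hi).le
    (Nat.zero_le _)
  rwa [P.first, abs_of_nonneg (sub_nonneg.2 ((P.pts_mem_Icc (mem_range.1 hi).le).1))] at key

lemma abs_RSsum_sub_le_of_tag_eq (htag : ∀ i, P.tag i = P.pts i)
    (hu : ∀ s ∈ S, ∀ t ∈ S, |u s - u t| ≤ H * |s - t| ^ r)
    (hf : ∀ s ∈ S, ∀ t ∈ S, |f s - f t| ≤ L * |s - t|) (hS : Set.Icc c d ⊆ S) :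
    |RSsum f u P - f c * (u d - u c)| ≤
      ∑ i ∈ range P.n, L * (P.pts (i + 1) - P.pts i) * (H * (d - P.pts (i + 1)) ^ r) := by
  have abel := sum_range_mul_sub_eq_sub_sum_succ (fun i => f (P.pts i))
    (fun i => u (P.pts i) - u d) P.n
  simp only [P.first, P.last, sub_self, mul_zero, zero_sub, sub_sub_sub_cancel_right] at abel
  have hsum : RSsum f u P - f c * (u d - u c) =
      -∑ i ∈ range P.n, (f (P.pts (i + 1)) - f (P.pts i)) * (u (P.pts (i + 1)) - u d) := by
    simp only [RSsum, htag, abel]; ring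
  rw [hsum, abs_neg]
  refine (abs_sum_le_sum_abs _ _).trans (sum_le_sum fun i hi => ?_)
  have key := P.abs_mul_le_of_holder_lipschitz hu hf hS (mem_range.1 hi) (mem_range.1 hi)
    le_rfl
  rwa [P.last, abs_sub_comm, abs_of_nonneg (sub_nonneg.2 ((P.pts_mem_Icc (mem_range.1 hi)).2))]
    at key

end Estimates

section Glue

variable {a m b : ℝ} (P : TaggedPartition a m) (Q : TaggedPartition m b)

def glue : TaggedPartition a b where
  n := P.n + Q.n
  pts i := if i ≤ P.n then P.pts i else Q.pts (i - P.n)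
  tag i := if i < P.n then P.tag i else Q.tag (i - P.n)
  mono i := by
    rcases lt_trichotomy i P.n with h | h | h
    · simp only [if_pos h.le, if_pos (by omega : i + 1 ≤ P.n)]
      exact P.mono i
    · subst h
      simpa [P.last, Q.first] using Q.mono 0
    · simp only [if_neg (by omega : ¬i ≤ P.n), if_neg (by omega : ¬i + 1 ≤ P.n),
        show i + 1 - P.n = i - P.n + 1 by omega]
      exact Q.mono _
  first := by simpa using P.first
  last := by
    rcases Nat.eq_zero_or_pos Q.n with h | h
    · simpa [h, P.last, ← Q.first] using Q.last
    · simpa [show ¬P.n + Q.n ≤ P.n by omega] using Q.last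
  tag_mem i := by
    rcases lt_trichotomy i P.n with h | h | h
    · simp only [if_pos h, if_pos h.le, if_pos (by omega : i + 1 ≤ P.n)]
      exact P.tag_mem i
    · subst h
      simpa [P.last, Q.first] using Q.tag_mem 0
    · simp only [if_neg (by omega : ¬i < P.n), if_neg (by omega : ¬i ≤ P.n),
        if_neg (by omega : ¬i + 1 ≤ P.n), show i + 1 - P.n = i - P.n + 1 by omega]
      exact Q.tag_mem _

lemma glue_pts_of_le {i : ℕ} (h : i ≤ P.n) : (P.glue Q).pts i = P.pts i := if_pos h

lemma glue_pts_add (j : ℕ) : (P.glue Q).pts (P.n + j) = Q.pts j := by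
  rcases Nat.eq_zero_or_pos j with rfl | h
  · simp [glue, P.last, Q.first]
  · simp [glue, show ¬P.n + j ≤ P.n by omega]

lemma RSsum_glue (f u : ℝ → ℝ) : RSsum f u (P.glue Q) = RSsum f u P + RSsum f u Q := by
  simp only [RSsum]
  rw [show (P.glue Q).n = P.n + Q.n from rfl, sum_range_add]
  congr 1
  · refine sum_congr rfl fun i hi => ?_
    have hi := mem_range.1 hi
    rw [P.glue_pts_of_le Q hi.le, P.glue_pts_of_le Q hi]
    simp [glue, hi]
  · refine sum_congr rfl fun j _ => ?_
    rw [add_assoc, P.glue_pts_add Q, P.glue_pts_add Q]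
    simp [glue]

variable {P Q} in
lemma MeshLT.glue {δ : ℝ} (hP : P.MeshLT δ) (hQ : Q.MeshLT δ) : (P.glue Q).MeshLT δ := by
  intro i hi
  rcases lt_or_ge i P.n with h | h
  · rw [P.glue_pts_of_le Q h, P.glue_pts_of_le Q h.le]
    exact hP i h
  · obtain ⟨j, rfl⟩ := Nat.exists_eq_add_of_le h
    rw [add_assoc, P.glue_pts_add Q, P.glue_pts_add Q]
    exact hQ j (by change P.n + j < P.n + Q.n at hi; omega)

end Glue

end TaggedPartition

section Uniform

variable {c d : ℝ}

noncomputable def uniformPts (c d : ℝ) (N : ℕ) (i : ℕ) : ℝ := c + i * ((d - c) / N)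

lemma uniformPts_succ_sub (N i : ℕ) :
    uniformPts c d N (i + 1) - uniformPts c d N i = (d - c) / N := by
  simp only [uniformPts]; push_cast; ring

lemma uniformPts_sub_left (N i : ℕ) : uniformPts c d N i - c = i * ((d - c) / N) :=
  add_sub_cancel_left _ _

lemma sub_uniformPts {N i : ℕ} (hN : N ≠ 0) (hi : i ≤ N) :
    d - uniformPts c d N i = (N - i : ℕ) * ((d - c) / N) := by
  simp only [uniformPts, Nat.cast_sub hi]; field_simp; ring

lemma uniformPts_mono (hcd : c ≤ d) (N i : ℕ) :
    uniformPts c d N i ≤ uniformPts c d N (i + 1) := by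
  have := uniformPts_succ_sub (c := c) (d := d) N i
  have : 0 ≤ (d - c) / N := div_nonneg (sub_nonneg.2 hcd) N.cast_nonneg
  linarith

lemma uniformPts_self {N : ℕ} (hN : N ≠ 0) : uniformPts c d N N = d := by
  simp only [uniformPts]; field_simp; ring

noncomputable def uniformRight (c d : ℝ) (hcd : c ≤ d) (N : ℕ) (hN : N ≠ 0) :
    TaggedPartition c d where
  n := N
  pts := uniformPts c d N
  tag i := uniformPts c d N (i + 1)
  mono := uniformPts_mono hcd N
  first := by simp [uniformPts]
  last := uniformPts_self hN
  tag_mem i := ⟨uniformPts_mono hcd N i, le_rfl⟩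

noncomputable def uniformLeft (c d : ℝ) (hcd : c ≤ d) (N : ℕ) (hN : N ≠ 0) :
    TaggedPartition c d where
  n := N
  pts := uniformPts c d N
  tag := uniformPts c d N
  mono := uniformPts_mono hcd N
  first := by simp [uniformPts]
  last := uniformPts_self hN
  tag_mem i := ⟨le_rfl, uniformPts_mono hcd N i⟩

lemma sum_uniform_holder_le {L H r : ℝ} (hr : 0 ≤ r) (hLH : 0 ≤ L * H) (hcd : c ≤ d) {N : ℕ}
    (hN : N ≠ 0) :
    ∑ i ∈ range N, L * ((d - c) / N) * (H * (i * ((d - c) / N)) ^ r) ≤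
      L * H * (d - c) ^ (r + 1) / (r + 1) := by
  set h := (d - c) / N
  have h0 : 0 ≤ h := div_nonneg (sub_nonneg.2 hcd) N.cast_nonneg
  calc ∑ i ∈ range N, L * h * (H * (i * h) ^ r)
      = L * H * h ^ (r + 1) * ∑ i ∈ range N, (i : ℝ) ^ r := by
        rw [mul_sum]
        refine sum_congr rfl fun i _ => ?_
        rw [Real.mul_rpow i.cast_nonneg h0, Real.rpow_add_one' h0 (by linarith)]
        ring
    _ ≤ L * H * h ^ (r + 1) * ((N : ℝ) ^ (r + 1) / (r + 1)) := by
        gcongr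
        exact sum_range_rpow_le hr N
    _ = L * H * (h * N) ^ (r + 1) / (r + 1) := by
        rw [Real.mul_rpow h0 N.cast_nonneg]; ring
    _ = L * H * (d - c) ^ (r + 1) / (r + 1) := by
        rw [div_mul_cancel₀ _ (Nat.cast_ne_zero.2 hN)]

lemma exists_ne_zero_div_lt (x : ℝ) {δ : ℝ} (hδ : 0 < δ) : ∃ N : ℕ, N ≠ 0 ∧ x / N < δ := by
  obtain ⟨N, hN⟩ := exists_nat_gt (x / δ)
  refine ⟨N + 1, N.succ_ne_zero, ?_⟩
  rw [div_lt_iff₀ (by positivity)]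
  rw [div_lt_iff₀ hδ] at hN
  push_cast
  nlinarith

end Uniform

def RSNear (f u : ℝ → ℝ) (c d J B : ℝ) : Prop :=
  ∀ δ > 0, ∃ P : TaggedPartition c d, P.MeshLT δ ∧ |RSsum f u P - J| ≤ B

section RSNear

variable {f u : ℝ → ℝ}

lemma IsRSIntegral.abs_sub_le {a b I J B : ℝ} (hI : IsRSIntegral f u a b I)
    (hJ : RSNear f u a b J B) : |I - J| ≤ B := by
  refine le_of_forall_pos_le_add fun ε hε => ?_
  obtain ⟨δ, hδ, hI⟩ := hI ε hε
  obtain ⟨P, hP, hJ⟩ := hJ δ hδ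
  have hI := hI P hP
  calc |I - J| ≤ |I - RSsum f u P| + |RSsum f u P - J| := _root_.abs_sub_le _ _ _
    _ ≤ B + ε := by rw [abs_sub_comm]; linarith

lemma RSNear.add {a m b J₁ J₂ B₁ B₂ : ℝ} (h₁ : RSNear f u a m J₁ B₁)
    (h₂ : RSNear f u m b J₂ B₂) :
    RSNear f u a b (J₁ + J₂) (B₁ + B₂) := by
  intro δ hδ
  obtain ⟨P, hP, hPJ⟩ := h₁ δ hδ
  obtain ⟨Q, hQ, hQJ⟩ := h₂ δ hδ
  refine ⟨P.glue Q, hP.glue hQ, ?_⟩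
  rw [TaggedPartition.RSsum_glue, add_sub_add_comm]
  exact (abs_add_le _ _).trans (add_le_add hPJ hQJ)

variable {S : Set ℝ} {c d H L r : ℝ}

lemma rsNear_right_endpoint (hr : 0 ≤ r) (hLH : 0 ≤ L * H) (hcd : c ≤ d)
    (hu : ∀ s ∈ S, ∀ t ∈ S, |u s - u t| ≤ H * |s - t| ^ r)
    (hf : ∀ s ∈ S, ∀ t ∈ S, |f s - f t| ≤ L * |s - t|) (hS : Set.Icc c d ⊆ S) :
    RSNear f u c d (f d * (u d - u c)) (L * H * (d - c) ^ (r + 1) / (r + 1)) := by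
  intro δ hδ
  obtain ⟨N, hN, hNδ⟩ := exists_ne_zero_div_lt (d - c) hδ
  let P := uniformRight c d hcd N hN
  refine ⟨P, fun i _ => (uniformPts_succ_sub N i).trans_lt hNδ, ?_⟩
  refine (P.abs_RSsum_sub_le_of_tag_eq_succ (fun _ => rfl) hu hf hS).trans ?_
  simpa only [P, uniformRight, uniformPts_succ_sub, uniformPts_sub_left]
    using sum_uniform_holder_le hr hLH hcd hN

lemma rsNear_left_endpoint (hr : 0 ≤ r) (hLH : 0 ≤ L * H) (hcd : c ≤ d)
    (hu : ∀ s ∈ S, ∀ t ∈ S, |u s - u t| ≤ H * |s - t| ^ r)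
    (hf : ∀ s ∈ S, ∀ t ∈ S, |f s - f t| ≤ L * |s - t|) (hS : Set.Icc c d ⊆ S) :
    RSNear f u c d (f c * (u d - u c)) (L * H * (d - c) ^ (r + 1) / (r + 1)) := by
  intro δ hδ
  obtain ⟨N, hN, hNδ⟩ := exists_ne_zero_div_lt (d - c) hδ
  let P := uniformLeft c d hcd N hN
  refine ⟨P, fun i _ => (uniformPts_succ_sub N i).trans_lt hNδ, ?_⟩
  refine (P.abs_RSsum_sub_le_of_tag_eq (fun _ => rfl) hu hf hS).trans ?_
  simp only [P, uniformLeft, uniformPts_succ_sub]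
  set g : ℕ → ℝ := fun j => L * ((d - c) / N) * (H * (j * ((d - c) / N)) ^ r)
  have hreflect : ∀ i ∈ range N,
      L * ((d - c) / N) * (H * (d - uniformPts c d N (i + 1)) ^ r) = g (N - 1 - i) := by
    intro i hi
    rw [sub_uniformPts hN (mem_range.1 hi), show N - (i + 1) = N - 1 - i by omega]
  rw [sum_congr rfl hreflect, sum_range_reflect g N]
  exact sum_uniform_holder_le hr hLH hcd hN

end RSNear

theorem two_point_dual_Lp_lipschitz_general
    (a b H L r p t0 x t1 I : ℝ) (f u : ℝ → ℝ)
    (hp : 1 < p) (hr : 0 < r) (hH : 0 ≤ H) (hL : 0 ≤ L)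
    (hu : ∀ s ∈ Set.Icc a b, ∀ t ∈ Set.Icc a b, |u s - u t| ≤ H * |s - t| ^ r)
    (hf : ∀ s ∈ Set.Icc a b, ∀ t ∈ Set.Icc a b, |f s - f t| ≤ L * |s - t|)
    (ht0 : a ≤ t0) (ht0x : t0 ≤ x) (hxt1 : x ≤ t1) (ht1 : t1 ≤ b)
    (hI : IsRSIntegral f u a b I) :
    |I - (u x - u a) * f t0 - (u b - u x) * f t1| ≤
      L * H * ((t0 - a) ^ (r + 1) / (r * p + 1) ^ (1 / p) +
        (t1 - t0) ^ (1 - 1 / p) *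
          (((x - t0) ^ (r * p + 1) + (t1 - x) ^ (r * p + 1)) / (r * p + 1)) ^ (1 / p) +
        (b - t1) ^ (r + 1) / (r * p + 1) ^ (1 / p)) := by
  have hLH : 0 ≤ L * H := mul_nonneg hL hH
  have right {c d : ℝ} (hac : a ≤ c) (hcd : c ≤ d) (hdb : d ≤ b) :=
    rsNear_right_endpoint hr.le hLH hcd hu hf (Set.Icc_subset_Icc hac hdb)
  have left {c d : ℝ} (hac : a ≤ c) (hcd : c ≤ d) (hdb : d ≤ b) :=
    rsNear_left_endpoint hr.le hLH hcd hu hf (Set.Icc_subset_Icc hac hdb)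
  have near := ((right le_rfl ht0 (by linarith)).add (left ht0 ht0x (by linarith))).add
    ((right (by linarith) hxt1 ht1).add (left (by linarith) ht1 le_rfl))
  have hmid := add_rpow_div_le hr.le hp (sub_nonneg.2 ht0x) (sub_nonneg.2 hxt1)
  rw [sub_add_sub_cancel'] at hmid
  calc |I - (u x - u a) * f t0 - (u b - u x) * f t1|
      = |I - (f t0 * (u t0 - u a) + f t0 * (u x - u t0) +
          (f t1 * (u t1 - u x) + f t1 * (u b - u t1)))| := by congr 1; ring
    _ ≤ L * H * (t0 - a) ^ (r + 1) / (r + 1) + L * H * (x - t0) ^ (r + 1) / (r + 1) +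
          (L * H * (t1 - x) ^ (r + 1) / (r + 1) + L * H * (b - t1) ^ (r + 1) / (r + 1)) :=
        hI.abs_sub_le near
    _ = L * H * ((t0 - a) ^ (r + 1) / (r + 1) +
          ((x - t0) ^ (r + 1) + (t1 - x) ^ (r + 1)) / (r + 1) +
          (b - t1) ^ (r + 1) / (r + 1)) := by ring
    _ ≤ _ := by
        have hbern := rpow_one_div_le_add_one hr.le hp.le
        refine mul_le_mul_of_nonneg_left (add_le_add (add_le_add ?_ hmid) ?_) hLH <;> gcongr

theorem two_point_dual_Lp_lipschitz
    (a b H L r p t0 x t1 I : ℝ) (f u : ℝ → ℝ)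
    (hp : 1 < p) (hr : 0 < r) (hr1 : r ≤ 1) (hH : 0 ≤ H) (hL : 0 ≤ L)
    (hu : ∀ s ∈ Set.Icc a b, ∀ t ∈ Set.Icc a b, |u s - u t| ≤ H * |s - t| ^ r)
    (hf : ∀ s ∈ Set.Icc a b, ∀ t ∈ Set.Icc a b, |f s - f t| ≤ L * |s - t|)
    (ht0 : a ≤ t0) (ht0x : t0 ≤ x) (hxt1 : x ≤ t1) (ht1 : t1 ≤ b)
    (hI : IsRSIntegral f u a b I) :
    |I - (u x - u a) * f t0 - (u b - u x) * f t1| ≤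
      L * H * ((t0 - a) ^ (r + 1) / (r * p + 1) ^ (1 / p) +
        (t1 - t0) ^ (1 - 1 / p) *
          (((x - t0) ^ (r * p + 1) + (t1 - x) ^ (r * p + 1)) / (r * p + 1)) ^ (1 / p) +
        (b - t1) ^ (r + 1) / (r * p + 1) ^ (1 / p)) :=
  two_point_dual_Lp_lipschitz_general a b H L r p t0 x t1 I f u hp hr hH hL hu hf ht0 ht0x hxt1 ht1
    hI
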